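/- Let d ∈ ℕ, σ = ReLU, and X ⊂ ℝ^d be compact. Set h = d + 3. Then for every 1-Lipschitz function f : X → ℝ and every ε > 0 there exists g ∈ tilde-G_{d,σ,d+3}(X,ℝ) such that max_{x∈X} |f(x) − g(x)| < ε; that is, the fixed-width class tilde-G_{d,σ,d+3}(X,ℝ) satisfies the universal approximation property for the space of 1-Lipschitz functions C₁(X,ℝ). -/

import Mathlib

open scoped BigOperators

noncomputable section

def relu (t : ℝ) : ℝ := max t 0

def entrywise {n : ℕ} (σ : ℝ → ℝ) (x : EuclideanSpace ℝ (Fin n)) : EuclideanSpace ℝ (Fin n) :=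
  WithLp.toLp 2 (fun i => σ (x i))

def matVec {k h : ℕ} (W : Matrix (Fin k) (Fin h) ℝ) (x : EuclideanSpace ℝ (Fin h)) :
    EuclideanSpace ℝ (Fin k) :=
  Matrix.toEuclideanLin W x

/-- Spectral norm of a real matrix, as the operator norm between Euclidean spaces. -/
def specNorm {k h : ℕ} (W : Matrix (Fin k) (Fin h) ℝ) : ℝ :=
  ‖LinearMap.toContinuousLinearMap (Matrix.toEuclideanLin W)‖

/-- Membership in `E_{h,σ}` with `σ = ReLU`. -/
def IsEulerStep {h : ℕ} (Φ : EuclideanSpace ℝ (Fin h) → EuclideanSpace ℝ (Fin h)) : Prop :=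
  ∃ (k : ℕ) (W : Matrix (Fin k) (Fin h) ℝ) (b : EuclideanSpace ℝ (Fin k)) (τ : ℝ),
    0 ≤ τ ∧ τ ≤ 2 ∧ specNorm W ≤ 1 ∧
    ∀ x, Φ x = x - τ • matVec W.transpose (entrywise relu (matVec W x + b))

def compChain {α : Type*} : (L : ℕ) → (Fin L → α → α) → α → α
  | 0, _, x => x
  | L + 1, Φ, x => Φ (Fin.last L) (compChain L (fun i => Φ i.castSucc) x)

/-- Membership in `G_{d,σ}(X,ℝ)` with `σ = ReLU`. -/
def InG {d : ℕ} (X : Set (EuclideanSpace ℝ (Fin d))) (g : EuclideanSpace ℝ (Fin d) → ℝ) : Prop :=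
  LipschitzOnWith 1 g X ∧
  ∃ (h L : ℕ) (Qhat : Matrix (Fin h) (Fin d) ℝ) (qhat : EuclideanSpace ℝ (Fin h))
    (Φ : Fin L → (EuclideanSpace ℝ (Fin h) → EuclideanSpace ℝ (Fin h)))
    (v : EuclideanSpace ℝ (Fin h)),
    (∀ ℓ, IsEulerStep (Φ ℓ)) ∧ ‖v‖ = 1 ∧
    ∀ x ∈ X, g x = ∑ i, v i * compChain L Φ (matVec Qhat x + qhat) i

def concatE {h₁ h₂ : ℕ} (u : EuclideanSpace ℝ (Fin h₁)) (v : EuclideanSpace ℝ (Fin h₂)) :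
    EuclideanSpace ℝ (Fin (h₁ + h₂)) :=
  WithLp.toLp 2 (Fin.append (fun i => u i) (fun i => v i))

/-- The residual blocks in `Ẽ_{h,σ}`: `(max{x₁,x₂}, min{x₁,x₂}, x₃, Φ'(x₄,…,x_{h+3}))`. -/
def tildeLayer {h : ℕ} (Φ' : EuclideanSpace ℝ (Fin h) → EuclideanSpace ℝ (Fin h))
    (x : EuclideanSpace ℝ (Fin (h + 3))) : EuclideanSpace ℝ (Fin (h + 3)) :=
  WithLp.toLp 2 fun j =>
    if _h0 : (j : ℕ) = 0 then max (x ⟨0, by omega⟩) (x ⟨1, by omega⟩)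
    else if _h1 : (j : ℕ) = 1 then min (x ⟨0, by omega⟩) (x ⟨1, by omega⟩)
    else if _h2 : (j : ℕ) = 2 then x ⟨2, by omega⟩
    else Φ' (WithLp.toLp 2 fun i => x ⟨(i : ℕ) + 3, by have := i.isLt; omega⟩)
      ⟨(j : ℕ) - 3, by have := j.isLt; omega⟩

/-- Membership in `Ẽ_{h,σ}` with `σ = ReLU`. -/
def IsTildeLayer {h : ℕ} (Φ : EuclideanSpace ℝ (Fin (h + 3)) → EuclideanSpace ℝ (Fin (h + 3))) :
    Prop :=
  ∃ Φ', IsEulerStep Φ' ∧ ∀ x, Φ x = tildeLayer Φ' x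

def emb0 {n : ℕ} : Fin 1 → Fin (n + 3) := fun _ => ⟨0, by omega⟩
def emb1 {n : ℕ} : Fin 1 → Fin (n + 3) := fun _ => ⟨1, by omega⟩
def emb2 {n : ℕ} : Fin 1 → Fin (n + 3) := fun _ => ⟨2, by omega⟩
def embT {n : ℕ} : Fin n → Fin (n + 3) := fun i => ⟨(i : ℕ) + 3, by have := i.isLt; omega⟩

/-- Membership in `R_{d,m}` for `m = (1,1,1,n)`: each block row of the matrix has spectral
norm at most `1`. -/
def memRm {d n : ℕ} (Q : Matrix (Fin (n + 3)) (Fin d) ℝ) : Prop :=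
  specNorm (Q.submatrix emb0 id) ≤ 1 ∧ specNorm (Q.submatrix emb1 id) ≤ 1 ∧
    specNorm (Q.submatrix emb2 id) ≤ 1 ∧ specNorm (Q.submatrix embT id) ≤ 1

def rowBlockSum {n r : ℕ} (A : Matrix (Fin (n + 3)) (Fin (n + 3)) ℝ)
    (e : Fin r → Fin (n + 3)) : ℝ :=
  specNorm (A.submatrix e emb0) + specNorm (A.submatrix e emb1) +
    specNorm (A.submatrix e emb2) + specNorm (A.submatrix e embT)

/-- Membership in `L_m` for `m = (1,1,1,n)`: for each block row, the sum of the spectral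
norms of the blocks is at most `1`. -/
def memLm {n : ℕ} (A : Matrix (Fin (n + 3)) (Fin (n + 3)) ℝ) : Prop :=
  rowBlockSum A emb0 ≤ 1 ∧ rowBlockSum A emb1 ≤ 1 ∧
    rowBlockSum A emb2 ≤ 1 ∧ rowBlockSum A embT ≤ 1

/-- `Φ_{L+1} ∘ A_L ∘ ⋯ ∘ Φ₂ ∘ A₁ ∘ Φ₁`, the alternating composition. -/
def altChain {α : Type*} : (L : ℕ) → (Fin (L + 1) → α → α) → (Fin L → α → α) → α → α
  | 0, Φ, _, x => Φ 0 x
  | L + 1, Φ, A, x =>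
      Φ (Fin.last (L + 1)) (A (Fin.last L)
        (altChain L (fun i => Φ i.castSucc) (fun i => A i.castSucc) x))

/-- Membership in the fixed-width class `tilde-G_{d,σ,n+3}(X,ℝ)` with `σ = ReLU`. -/
def InTildeG {d n : ℕ} (X : Set (EuclideanSpace ℝ (Fin d)))
    (g : EuclideanSpace ℝ (Fin d) → ℝ) : Prop :=
  ∃ (L : ℕ) (Qhat : Matrix (Fin (n + 3)) (Fin d) ℝ) (qhat : EuclideanSpace ℝ (Fin (n + 3)))
    (Φ : Fin (L + 1) → (EuclideanSpace ℝ (Fin (n + 3)) → EuclideanSpace ℝ (Fin (n + 3))))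
    (Ahat : Fin L → Matrix (Fin (n + 3)) (Fin (n + 3)) ℝ)
    (ahat : Fin L → EuclideanSpace ℝ (Fin (n + 3)))
    (v : EuclideanSpace ℝ (Fin (n + 3))),
    memRm Qhat ∧ (∀ ℓ, IsTildeLayer (Φ ℓ)) ∧ (∀ ℓ, memLm (Ahat ℓ)) ∧ (∑ i, |v i|) ≤ 1 ∧
    ∀ x ∈ X,
      g x = ∑ i, v i *
        altChain L Φ (fun ℓ u => matVec (Ahat ℓ) u + ahat ℓ) (matVec Qhat x + qhat) i


/-!
On a compact set `X`, a `1`-Lipschitz `f` is uniformly within `2δ` of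
`max_{p ∈ t} min_{q ∈ t} φ_{pq}` for a finite `δ`-net `t ⊆ X`, where `φ_{pq}` is the affine
function with gradient of norm `≤ 1` that agrees with `f` at `p` and at `q`: at `x` close to
`r ∈ t`, the term `p = r` pushes the max-min up to about `f x`, while `φ_{pr}` bounds every
inner minimum by about `f x`.

Such a max-min of `1`-Lipschitz affine functions is evaluated by a width-`d + 3` network whose
residual parts are identities: the last `d` coordinates carry the input `x` unchanged, and the
first three serve as registers. The max/min sorting of the first two coordinates in every layer
folds a new affine value `⟪a, x⟫ + b` into a running minimum in register `1`, or folds a finished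
minimum into a running maximum kept in register `2`.
-/

open scoped InnerProductSpace

section MaxMinInterpolation

variable {E : Type*} [NormedAddCommGroup E] [InnerProductSpace ℝ E] {f : E → ℝ} {X : Set E}

/-- For `p = q` this is `0`, through the junk value of division by `‖p - q‖ ^ 2 = 0`. -/
def lipSlope (f : E → ℝ) (p q : E) : E := ((f p - f q) / ‖p - q‖ ^ 2) • (p - q)

def lipInterp (f : E → ℝ) (p q x : E) : ℝ := f p + ⟪lipSlope f p q, x - p⟫_ℝ

lemma lipInterp_eq (p q x : E) :
    lipInterp f p q x = ⟪lipSlope f p q, x⟫_ℝ + (f p - ⟪lipSlope f p q, p⟫_ℝ) := by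
  rw [lipInterp, inner_sub_right]; ring

lemma lipInterp_left (p q : E) : lipInterp f p q p = f p := by
  simp [lipInterp]

lemma lipInterp_right (p q : E) : lipInterp f p q q = f q := by
  rcases eq_or_ne p q with rfl | hpq
  · exact lipInterp_left p p
  have hnorm : ‖p - q‖ ≠ 0 := norm_ne_zero_iff.mpr (sub_ne_zero.mpr hpq)
  rw [lipInterp, lipSlope, real_inner_smul_left, ← neg_sub p q, inner_neg_right,
    real_inner_self_eq_norm_sq]
  field_simp
  ring

lemma norm_lipSlope_le (hf : LipschitzOnWith 1 f X) {p q : E} (hp : p ∈ X) (hq : q ∈ X) :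
    ‖lipSlope f p q‖ ≤ 1 := by
  rcases eq_or_ne p q with rfl | hpq
  · simp [lipSlope]
  have hpos : 0 < ‖p - q‖ := norm_pos_iff.mpr (sub_ne_zero.mpr hpq)
  have hlip : |f p - f q| ≤ ‖p - q‖ := by
    simpa [Real.dist_eq, dist_eq_norm] using hf.dist_le_mul p hp q hq
  rw [lipSlope, norm_smul, Real.norm_eq_abs, abs_div, abs_of_pos (by positivity : 0 < ‖p - q‖ ^ 2),
    div_mul_eq_mul_div, div_le_one (by positivity)]
  nlinarith

lemma abs_lipInterp_sub_le (hf : LipschitzOnWith 1 f X) {p q : E} (hp : p ∈ X) (hq : q ∈ X)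
    (x y : E) : |lipInterp f p q x - lipInterp f p q y| ≤ ‖x - y‖ := by
  have h : lipInterp f p q x - lipInterp f p q y = ⟪lipSlope f p q, x - y⟫_ℝ := by
    simp only [lipInterp_eq, inner_sub_right]; ring
  rw [h]
  calc _ ≤ ‖lipSlope f p q‖ * ‖x - y‖ := abs_real_inner_le_norm _ _
    _ ≤ ‖x - y‖ := mul_le_of_le_one_left (norm_nonneg _) (norm_lipSlope_le hf hp hq)

/-- The constants `-C` and `C` seeding the folds are inert where `|f| ≤ C`; they only make the
folds meaningful for an empty net. -/
def maxMinInterp (f : E → ℝ) (C : ℝ) (t : Finset E) (x : E) : ℝ :=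
  t.fold max (-C) fun p => t.fold min C fun q => lipInterp f p q x

lemma abs_sub_maxMinInterp_le (hf : LipschitzOnWith 1 f X) {t : Finset E} (ht : ∀ p ∈ t, p ∈ X)
    {C : ℝ} {x r : E} (hx : x ∈ X) (hC : |f x| ≤ C) (hr : r ∈ t) :
    |f x - maxMinInterp f C t x| ≤ 2 * ‖x - r‖ := by
  have hfr : |f x - f r| ≤ ‖x - r‖ := by
    simpa [Real.dist_eq, dist_eq_norm] using hf.dist_le_mul x hx r (ht r hr)
  have hnear {p q : E} (hp : p ∈ t) (hq : q ∈ t) :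
      |lipInterp f p q x - lipInterp f p q r| ≤ ‖x - r‖ :=
    abs_lipInterp_sub_le hf (ht p hp) (ht q hq) x r
  have hupper : maxMinInterp f C t x ≤ f x + 2 * ‖x - r‖ := by
    refine (Finset.fold_max_le _).mpr ⟨by linarith [neg_abs_le (f x), norm_nonneg (x - r)],
      fun p hp => (Finset.fold_min_le _).mpr (Or.inr ⟨r, hr, ?_⟩)⟩
    have := hnear hp hr
    rw [lipInterp_right] at this
    linarith [abs_le.mp this, abs_le.mp hfr]
  have hlower : f x - 2 * ‖x - r‖ ≤ maxMinInterp f C t x := by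
    refine (Finset.le_fold_max _).mpr (Or.inr ⟨r, hr, (Finset.le_fold_min _).mpr
      ⟨by linarith [le_abs_self (f x), norm_nonneg (x - r)], fun q hq => ?_⟩⟩)
    have := hnear hr hq
    rw [lipInterp_left] at this
    linarith [abs_le.mp this, abs_le.mp hfr]
  exact abs_sub_le_iff.mpr ⟨by linarith, by linarith⟩

end MaxMinInterpolation

section SpectralNorm

variable {k n : ℕ}

lemma matVec_apply (W : Matrix (Fin k) (Fin n) ℝ) (x : EuclideanSpace ℝ (Fin n)) (j : Fin k) :
    matVec W x j = ∑ i, W j i * x i :=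
  rfl

lemma specNorm_le_of_norm_matVec_le {W : Matrix (Fin k) (Fin n) ℝ} {c : ℝ} (hc : 0 ≤ c)
    (h : ∀ x, ‖matVec W x‖ ≤ c * ‖x‖) : specNorm W ≤ c :=
  ContinuousLinearMap.opNorm_le_bound _ hc h

@[simp]
lemma specNorm_zero : specNorm (0 : Matrix (Fin k) (Fin n) ℝ) = 0 := by
  simp [specNorm]

lemma matVec_one (x : EuclideanSpace ℝ (Fin n)) : matVec (1 : Matrix (Fin n) (Fin n) ℝ) x = x := by
  ext j
  simp [matVec_apply, Matrix.one_apply]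

lemma specNorm_one_le : specNorm (1 : Matrix (Fin n) (Fin n) ℝ) ≤ 1 :=
  specNorm_le_of_norm_matVec_le zero_le_one fun x => by rw [matVec_one, one_mul]

lemma specNorm_le_norm_row (W : Matrix (Fin 1) (Fin n) ℝ) :
    specNorm W ≤ ‖WithLp.toLp 2 (W 0)‖ :=
  specNorm_le_of_norm_matVec_le (norm_nonneg _) fun x => by
    have h : ‖matVec W x‖ = |⟪WithLp.toLp 2 (W 0), x⟫_ℝ| := by
      simp [EuclideanSpace.norm_eq, Real.sqrt_sq_eq_abs, matVec_apply, PiLp.inner_apply, mul_comm]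
    exact h ▸ abs_real_inner_le_norm _ _

lemma specNorm_le_abs (W : Matrix (Fin 1) (Fin 1) ℝ) : specNorm W ≤ |W 0 0| := by
  simpa [EuclideanSpace.norm_eq, Real.sqrt_sq_eq_abs] using specNorm_le_norm_row W

end SpectralNorm

lemma altChain_snoc {α : Type*} (L : ℕ) (Φ : Fin (L + 1) → α → α) (A : Fin L → α → α)
    (Φ' A' : α → α) (x : α) :
    altChain (L + 1) (Fin.snoc Φ Φ') (Fin.snoc A A') x = Φ' (A' (altChain L Φ A x)) := by
  simp only [altChain, Fin.snoc_last, Fin.snoc_castSucc]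

section Realization

variable {d n : ℕ} {X : Set (EuclideanSpace ℝ (Fin d))}

lemma isEulerStep_id : IsEulerStep (id : EuclideanSpace ℝ (Fin n) → EuclideanSpace ℝ (Fin n)) :=
  ⟨0, 0, 0, 0, le_rfl, zero_le_two, by simp, fun x => by simp⟩

lemma isTildeLayer_tildeLayer_id : IsTildeLayer (tildeLayer (h := n) id) :=
  ⟨id, isEulerStep_id, fun _ => rfl⟩

/-- `s` is, on `X`, the hidden state of a network as in `InTildeG`, before the read-out `v`. -/
def IsRealized (X : Set (EuclideanSpace ℝ (Fin d)))
    (s : EuclideanSpace ℝ (Fin d) → EuclideanSpace ℝ (Fin (n + 3))) : Prop :=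
  ∃ (L : ℕ) (Qhat : Matrix (Fin (n + 3)) (Fin d) ℝ) (qhat : EuclideanSpace ℝ (Fin (n + 3)))
    (Φ : Fin (L + 1) → (EuclideanSpace ℝ (Fin (n + 3)) → EuclideanSpace ℝ (Fin (n + 3))))
    (Ahat : Fin L → Matrix (Fin (n + 3)) (Fin (n + 3)) ℝ)
    (ahat : Fin L → EuclideanSpace ℝ (Fin (n + 3))),
    memRm Qhat ∧ (∀ ℓ, IsTildeLayer (Φ ℓ)) ∧ (∀ ℓ, memLm (Ahat ℓ)) ∧
    ∀ x ∈ X, s x = altChain L Φ (fun ℓ u => matVec (Ahat ℓ) u + ahat ℓ) (matVec Qhat x + qhat)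

lemma isRealized_of_memRm {Q : Matrix (Fin (n + 3)) (Fin d) ℝ} (hQ : memRm Q)
    (q : EuclideanSpace ℝ (Fin (n + 3)))
    {Φ : EuclideanSpace ℝ (Fin (n + 3)) → EuclideanSpace ℝ (Fin (n + 3))} (hΦ : IsTildeLayer Φ) :
    IsRealized X fun x => Φ (matVec Q x + q) :=
  ⟨0, Q, q, fun _ => Φ, Fin.elim0, Fin.elim0, hQ, fun _ => hΦ, fun ℓ => ℓ.elim0, fun _ _ => rfl⟩

lemma IsRealized.comp {s : EuclideanSpace ℝ (Fin d) → EuclideanSpace ℝ (Fin (n + 3))}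
    (hs : IsRealized X s) {A : Matrix (Fin (n + 3)) (Fin (n + 3)) ℝ} (hA : memLm A)
    (a : EuclideanSpace ℝ (Fin (n + 3)))
    {Φ : EuclideanSpace ℝ (Fin (n + 3)) → EuclideanSpace ℝ (Fin (n + 3))} (hΦ : IsTildeLayer Φ) :
    IsRealized X fun x => Φ (matVec A (s x) + a) := by
  obtain ⟨L, Q, q, Φs, As, as, hQ, hΦs, hAs, hs⟩ := hs
  refine ⟨L + 1, Q, q, Fin.snoc Φs Φ, Fin.snoc As A, Fin.snoc as a, hQ,
    Fin.lastCases (by simpa using hΦ) (by simpa using hΦs),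
    Fin.lastCases (by simpa using hA) (by simpa using hAs), fun x hx => ?_⟩
  have hsnoc : (fun ℓ u => matVec (Fin.snoc (α := fun _ => Matrix _ _ ℝ) As A ℓ) u +
        Fin.snoc (α := fun _ => EuclideanSpace ℝ (Fin (n + 3))) as a ℓ) =
      Fin.snoc (fun ℓ u => matVec (As ℓ) u + as ℓ) (fun u => matVec A u + a) := by
    funext ℓ
    induction ℓ using Fin.lastCases <;> simp
  rw [hsnoc, altChain_snoc, ← hs x hx]

lemma IsRealized.inTildeG {s : EuclideanSpace ℝ (Fin d) → EuclideanSpace ℝ (Fin (n + 3))}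
    (hs : IsRealized X s) {v : EuclideanSpace ℝ (Fin (n + 3))} (hv : ∑ i, |v i| ≤ 1)
    {g : EuclideanSpace ℝ (Fin d) → ℝ} (hg : ∀ x ∈ X, g x = ∑ i, v i * s x i) :
    InTildeG (n := n) X g := by
  obtain ⟨L, Q, q, Φ, A, a, hQ, hΦ, hA, hs⟩ := hs
  exact ⟨L, Q, q, Φ, A, a, v, hQ, hΦ, hA, hv, fun x hx => hs x hx ▸ hg x hx⟩

end Realization

section Registers

variable {n : ℕ}

def regVec (a : Fin 3 → ℝ) (y : EuclideanSpace ℝ (Fin n)) : EuclideanSpace ℝ (Fin (n + 3)) :=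
  WithLp.toLp 2 fun j => if h : (j : ℕ) < 3 then a ⟨j, h⟩ else y ⟨j - 3, by omega⟩

lemma regVec_apply_of_lt (a : Fin 3 → ℝ) (y : EuclideanSpace ℝ (Fin n)) {j : Fin (n + 3)}
    (hj : (j : ℕ) < 3) : regVec a y j = a ⟨j, hj⟩ := by
  simp [regVec, hj]

@[simp]
lemma regVec_apply_embT (a : Fin 3 → ℝ) (y : EuclideanSpace ℝ (Fin n)) (i : Fin n) :
    regVec a y (embT i) = y i := by
  simp [regVec, embT]

lemma regVec_add (a b : Fin 3 → ℝ) (y z : EuclideanSpace ℝ (Fin n)) :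
    regVec a y + regVec b z = regVec (a + b) (y + z) := by
  ext j
  simp only [regVec, PiLp.add_apply]
  split_ifs <;> rfl

lemma tildeLayer_id_regVec (a : Fin 3 → ℝ) (y : EuclideanSpace ℝ (Fin n)) :
    tildeLayer id (regVec a y) = regVec ![max (a 0) (a 1), min (a 0) (a 1), a 2] y := by
  ext ⟨j, hj⟩
  rcases j with _ | _ | _ | j <;> simp [tildeLayer, regVec]

lemma sum_regVec_mul_regVec (c a : Fin 3 → ℝ) (w y : EuclideanSpace ℝ (Fin n)) :
    ∑ j, regVec c w j * regVec a y j = ∑ k, c k * a k + ⟪w, y⟫_ℝ := by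
  have h3 (i : ℕ) : ¬ i + 1 + 1 + 1 < 3 := by omega
  simp only [Fin.sum_univ_succ, regVec, PiLp.inner_apply, Fin.val_succ, h3, dif_neg,
    not_false_eq_true]
  simp [add_assoc, mul_comm]

def regMatrix (c : Matrix (Fin 3) (Fin 3) ℝ) (w : Fin 3 → EuclideanSpace ℝ (Fin n)) :
    Matrix (Fin (n + 3)) (Fin (n + 3)) ℝ :=
  fun j l => if h : (j : ℕ) < 3 then regVec (c ⟨j, h⟩) (w ⟨j, h⟩) l else (1 : Matrix _ _ ℝ) j l

lemma matVec_regMatrix_regVec (c : Matrix (Fin 3) (Fin 3) ℝ)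
    (w : Fin 3 → EuclideanSpace ℝ (Fin n)) (a : Fin 3 → ℝ) (y : EuclideanSpace ℝ (Fin n)) :
    matVec (regMatrix c w) (regVec a y) = regVec (fun k => ∑ i, c k i * a i + ⟪w k, y⟫_ℝ) y := by
  ext j
  by_cases hj : (j : ℕ) < 3
  · simp [matVec_apply, regMatrix, hj, sum_regVec_mul_regVec, regVec_apply_of_lt]
  · simp [matVec_apply, regMatrix, hj, Matrix.one_apply]
    simp [regVec, hj]

lemma tildeLayer_id_regMatrix_regVec (c : Matrix (Fin 3) (Fin 3) ℝ)
    (w : Fin 3 → EuclideanSpace ℝ (Fin n)) (b a : Fin 3 → ℝ) (y : EuclideanSpace ℝ (Fin n)) :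
    tildeLayer id (matVec (regMatrix c w) (regVec a y) + regVec b 0) =
      let p k := ∑ i, c k i * a i + ⟪w k, y⟫_ℝ + b k
      regVec ![max (p 0) (p 1), min (p 0) (p 1), p 2] y := by
  rw [matVec_regMatrix_regVec, regVec_add, add_zero, tildeLayer_id_regVec]
  rfl

lemma rowBlockSum_le (A : Matrix (Fin (n + 3)) (Fin (n + 3)) ℝ) (e : Fin 1 → Fin (n + 3)) :
    rowBlockSum A e ≤ |A (e 0) ⟨0, by omega⟩| + |A (e 0) ⟨1, by omega⟩| + |A (e 0) ⟨2, by omega⟩|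
      + ‖WithLp.toLp 2 fun i => A (e 0) (embT i)‖ := by
  unfold rowBlockSum
  gcongr
  · exact specNorm_le_abs _
  · exact specNorm_le_abs _
  · exact specNorm_le_abs _
  · exact specNorm_le_norm_row _

lemma memLm_regMatrix {c : Matrix (Fin 3) (Fin 3) ℝ} {w : Fin 3 → EuclideanSpace ℝ (Fin n)}
    (h : ∀ k, ∑ i, |c k i| + ‖w k‖ ≤ 1) : memLm (regMatrix c w) := by
  have hrow (k : Fin 3) (e : Fin 1 → Fin (n + 3)) (he : (e 0 : ℕ) = k) :
      rowBlockSum (regMatrix c w) e ≤ 1 := by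
    have hrow : ∀ l, regMatrix c w (e 0) l = regVec (c k) (w k) l := by
      simp [regMatrix, he]
    refine (rowBlockSum_le _ e).trans (le_of_eq_of_le ?_ (h k))
    simp only [hrow, regVec_apply_embT]
    simp [regVec, Fin.sum_univ_three]
  have htail (e : Fin 1 → Fin (n + 3)) (he : (e 0 : ℕ) < 3) :
      (regMatrix c w).submatrix embT e = 0 := by
    ext i j
    have : (e j : ℕ) ≠ i + 3 := by rw [Subsingleton.elim j 0]; omega
    simp [regMatrix, embT, Matrix.one_apply, Fin.ext_iff, this.symm]
  have hone : (regMatrix c w).submatrix embT embT = 1 := by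
    ext i j
    simp [regMatrix, embT, Matrix.one_apply, Fin.ext_iff]
  refine ⟨hrow 0 _ rfl, hrow 1 _ rfl, hrow 2 _ rfl, ?_⟩
  simp [rowBlockSum, htail emb0 (by simp [emb0]), htail emb1 (by simp [emb1]),
    htail emb2 (by simp [emb2]), hone, specNorm_one_le]

lemma embT_injective : Function.Injective (embT (n := n)) :=
  fun i i' h => Fin.ext (by simpa [embT] using congrArg Fin.val h)

def tailMatrix : Matrix (Fin (n + 3)) (Fin n) ℝ := (1 : Matrix _ _ ℝ).submatrix id embT

lemma matVec_tailMatrix (x : EuclideanSpace ℝ (Fin n)) : matVec tailMatrix x = regVec 0 x := by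
  ext ⟨j, hj⟩
  rcases j with _ | _ | _ | j
  iterate 3 simp [matVec_apply, tailMatrix, regVec, Matrix.one_apply, embT, Fin.ext_iff]
  have : (⟨j + 3, hj⟩ : Fin (n + 3)) = embT ⟨j, by omega⟩ := rfl
  simp [matVec_apply, tailMatrix, this, Matrix.one_apply, embT_injective.eq_iff]

lemma memRm_tailMatrix : memRm (tailMatrix (n := n)) := by
  have hzero (e : Fin 1 → Fin (n + 3)) (he : (e 0 : ℕ) < 3) : tailMatrix.submatrix e id = 0 := by
    ext i j
    have : (e i : ℕ) ≠ j + 3 := by rw [Subsingleton.elim i 0]; omega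
    simp [tailMatrix, embT, Matrix.one_apply, Fin.ext_iff, this]
  have hone : tailMatrix.submatrix embT id = (1 : Matrix (Fin n) (Fin n) ℝ) := by
    ext i j
    simp [tailMatrix, embT, Matrix.one_apply, Fin.ext_iff]
  refine ⟨?_, ?_, ?_, ?_⟩
  · simp [hzero emb0 (by simp [emb0])]
  · simp [hzero emb1 (by simp [emb1])]
  · simp [hzero emb2 (by simp [emb2])]
  · simpa [hone] using specNorm_one_le

end Registers

section RegisterMachine

variable {d : ℕ} {X : Set (EuclideanSpace ℝ (Fin d))}

/-- A realized state holds `m x` in register `1`, `M x` in register `2` and the input `x` in the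
tail; register `0` is scratch. -/
def Reachable (X : Set (EuclideanSpace ℝ (Fin d))) (m M : EuclideanSpace ℝ (Fin d) → ℝ) : Prop :=
  ∃ s : EuclideanSpace ℝ (Fin d) → EuclideanSpace ℝ (Fin (d + 3)), IsRealized X s ∧
    ∀ x ∈ X, ∃ t, s x = regVec ![t, m x, M x] x

lemma reachable_const (a b : ℝ) : Reachable X (fun _ => a) (fun _ => b) := by
  refine ⟨_, isRealized_of_memRm memRm_tailMatrix (regVec ![a, a, b] 0)
    isTildeLayer_tildeLayer_id, fun x _ => ⟨a, ?_⟩⟩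
  rw [matVec_tailMatrix, regVec_add, zero_add, add_zero, tildeLayer_id_regVec]
  simp

lemma Reachable.min_affine {m M : EuclideanSpace ℝ (Fin d) → ℝ} (h : Reachable X m M)
    {a : EuclideanSpace ℝ (Fin d)} (ha : ‖a‖ ≤ 1) (b : ℝ) :
    Reachable X (fun x => min (⟪a, x⟫_ℝ + b) (m x)) M := by
  obtain ⟨s, hs, hsx⟩ := h
  -- the layer is fed the registers `(⟪a, x⟫ + b, m x, M x)`
  have hrows : ∀ k, ∑ i, |!![0, 0, 0; 0, 1, 0; 0, 0, 1] k i| + ‖![a, 0, 0] k‖ ≤ 1 := by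
    intro k; fin_cases k <;> simp [Fin.sum_univ_three, ha]
  refine ⟨_, hs.comp (memLm_regMatrix hrows) (regVec ![b, 0, 0] 0) isTildeLayer_tildeLayer_id,
    fun x hx => ?_⟩
  obtain ⟨t, ht⟩ := hsx x hx
  refine ⟨max (⟪a, x⟫_ℝ + b) (m x), ?_⟩
  rw [ht, tildeLayer_id_regMatrix_regVec]
  simp [Fin.sum_univ_three]

lemma Reachable.max_reset {m M : EuclideanSpace ℝ (Fin d) → ℝ} (h : Reachable X m M) (c : ℝ) :
    Reachable X (fun _ => c) (fun x => max (m x) (M x)) := by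
  obtain ⟨s, hs, hsx⟩ := h
  -- two layers: `(m x, M x, 0)` puts the max into register `0`, then `(c, c, max)` moves it on
  have hrows₁ : ∀ k, ∑ i, |!![0, 1, 0; 0, 0, 1; 0, 0, 0] k i| +
      ‖(0 : Fin 3 → EuclideanSpace ℝ (Fin d)) k‖ ≤ 1 := by
    intro k; fin_cases k <;> simp [Fin.sum_univ_three]
  have hrows₂ : ∀ k, ∑ i, |!![0, 0, 0; 0, 0, 0; 1, 0, 0] k i| +
      ‖(0 : Fin 3 → EuclideanSpace ℝ (Fin d)) k‖ ≤ 1 := by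
    intro k; fin_cases k <;> simp [Fin.sum_univ_three]
  refine ⟨_, (hs.comp (memLm_regMatrix hrows₁) (regVec 0 0) isTildeLayer_tildeLayer_id).comp
    (memLm_regMatrix hrows₂) (regVec ![c, c, 0] 0) isTildeLayer_tildeLayer_id, fun x hx => ?_⟩
  obtain ⟨t, ht⟩ := hsx x hx
  refine ⟨c, ?_⟩
  rw [ht, tildeLayer_id_regMatrix_regVec, tildeLayer_id_regMatrix_regVec]
  simp [Fin.sum_univ_three]

lemma Reachable.inTildeG {m M : EuclideanSpace ℝ (Fin d) → ℝ} (h : Reachable X m M) :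
    InTildeG (n := d) X M := by
  obtain ⟨s, hs, hsx⟩ := h
  refine hs.inTildeG (v := EuclideanSpace.single ⟨2, by omega⟩ 1) ?_ fun x hx => ?_
  · simp [apply_ite (abs : ℝ → ℝ)]
  · obtain ⟨t, ht⟩ := hsx x hx
    simp [ht, regVec_apply_of_lt]

lemma Reachable.fold_min {ι : Type*} {m M : EuclideanSpace ℝ (Fin d) → ℝ} (h : Reachable X m M)
    (s : Finset ι) {a : ι → EuclideanSpace ℝ (Fin d)} (ha : ∀ i ∈ s, ‖a i‖ ≤ 1) (b : ι → ℝ) :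
    Reachable X (fun x => s.fold min (m x) fun i => ⟪a i, x⟫_ℝ + b i) M := by
  classical
  induction s using Finset.induction_on with
  | empty => simpa using h
  | insert i s hi ih =>
    simp only [Finset.fold_insert hi]
    exact (ih fun j hj => ha j (Finset.mem_insert_of_mem hj)).min_affine
      (ha i (Finset.mem_insert_self i s)) (b i)

lemma Reachable.fold_max {ι : Type*} {c : ℝ} {M : EuclideanSpace ℝ (Fin d) → ℝ}
    (h : Reachable X (fun _ => c) M) (s : Finset ι) {G : ι → EuclideanSpace ℝ (Fin d) → ℝ}
    (hG : ∀ i ∈ s, ∀ M', Reachable X (fun _ => c) M' → Reachable X (G i) M') :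
    Reachable X (fun _ => c) fun x => s.fold max (M x) fun i => G i x := by
  classical
  induction s using Finset.induction_on with
  | empty => simpa using h
  | insert i s hi ih =>
    simp only [Finset.fold_insert hi]
    exact (hG i (Finset.mem_insert_self i s) _
      (ih fun j hj => hG j (Finset.mem_insert_of_mem hj))).max_reset c

lemma reachable_maxMinInterp {f : EuclideanSpace ℝ (Fin d) → ℝ} (hf : LipschitzOnWith 1 f X)
    (C : ℝ) {t : Finset (EuclideanSpace ℝ (Fin d))} (ht : ∀ p ∈ t, p ∈ X) :
    Reachable X (fun _ => C) (maxMinInterp f C t) := by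
  unfold maxMinInterp
  simp only [lipInterp_eq]
  exact (reachable_const C (-C)).fold_max t fun p hp M' hM' =>
    hM'.fold_min t (fun q hq => norm_lipSlope_le hf (ht p hp) (ht q hq)) _

end RegisterMachine

/-- Universal approximation with fixed width `h = d + 3`: the class
`tilde-G_{d,ReLU,d+3}(X,ℝ)` is dense in the `1`-Lipschitz functions on a compact set `X`. -/
theorem stmt13 (d : ℕ) (X : Set (EuclideanSpace ℝ (Fin d))) (hX : IsCompact X)
    (f : EuclideanSpace ℝ (Fin d) → ℝ) (hf : LipschitzOnWith 1 f X)
    (ε : ℝ) (hε : 0 < ε) :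
    ∃ g : EuclideanSpace ℝ (Fin d) → ℝ,
      InTildeG (n := d) X g ∧ ∀ x ∈ X, |f x - g x| < ε := by
  obtain ⟨C, hC⟩ := hX.exists_bound_of_continuousOn hf.continuousOn
  obtain ⟨t, htX, hcover⟩ := hX.elim_nhds_subcover (fun p => Metric.ball p (ε / 2))
    fun p _ => Metric.ball_mem_nhds p (half_pos hε)
  refine ⟨maxMinInterp f C t, (reachable_maxMinInterp hf C htX).inTildeG, fun x hx => ?_⟩
  obtain ⟨r, hr, hxr⟩ := Set.mem_iUnion₂.mp (hcover hx)
  rw [Metric.mem_ball, dist_eq_norm] at hxr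
  calc |f x - maxMinInterp f C t x| ≤ 2 * ‖x - r‖ :=
        abs_sub_maxMinInterp_le hf htX hx (by simpa using hC x hx) hr
    _ < ε := by linarith
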